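/- Assume 𝐌 : I^p → I^p is a mean-type mapping and K : I^p → I is its unique 𝐌-invariant mean. If F : I^p → ℝ is reflexive (F(t,…,t) = t for all t ∈ I), continuous at every point of the diagonal Δ(I^p) := {(u₁,…,u_p) ∈ I^p : u₁ = … = u_p}, and satisfies F ∘ 𝐌 = F, then F = K. -/

import Mathlib

open Filter Set Topology

/-- `M` is a mean on the interval `I` (for `p`-tuples): its value is between the
minimum and the maximum of the arguments, for every tuple with entries in `I`. -/
def IsMean (I : Set ℝ) (p : ℕ) (M : (Fin p → ℝ) → ℝ) : Prop :=
  ∀ v : Fin p → ℝ, (∀ i, v i ∈ I) →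
    sInf (Set.range v) ≤ M v ∧ M v ≤ sSup (Set.range v)

/-- A mean-type mapping: every coordinate function is a mean on `I`, and it maps
`I^p` into `I^p`. -/
def IsMeanType (I : Set ℝ) (p : ℕ) (T : (Fin p → ℝ) → Fin p → ℝ) : Prop :=
  (∀ i, IsMean I p fun v => T v i) ∧
    ∀ v : Fin p → ℝ, (∀ i, v i ∈ I) → ∀ i, T v i ∈ I

/-- The unfolded orbit `O*_𝐌(v)`: the `(n*p + i)`-th term (`0 ≤ i < p`) is the
`i`-th coordinate of `𝐌ⁿ(v)`. -/
def orbitSeq (p : ℕ) (hp : 0 < p) (T : (Fin p → ℝ) → Fin p → ℝ)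
    (v : Fin p → ℝ) : ℕ → ℝ :=
  fun k => (T^[k / p] v) ⟨k % p, Nat.mod_lt k hp⟩

/-!
The minimum and the maximum of the coordinates of `𝐌ⁿ(w)` are monotone in `n`, so they
converge; their limits `w ↦ lim min 𝐌ⁿ(w)` and `w ↦ lim max 𝐌ⁿ(w)` are `𝐌`-invariant means,
hence both equal `K`. So every orbit `𝐌ⁿ(v)` is squeezed onto the diagonal point
`(K v, …, K v)`. Since `F` is constant along orbits and continuous there, `F v = K v`.
-/

noncomputable section

variable {I : Set ℝ} {p : ℕ} {T : (Fin p → ℝ) → Fin p → ℝ}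

theorem sInf_range_le_apply (w : Fin p → ℝ) (i : Fin p) : sInf (range w) ≤ w i :=
  csInf_le (finite_range w).bddBelow (mem_range_self i)

theorem apply_le_sSup_range (w : Fin p → ℝ) (i : Fin p) : w i ≤ sSup (range w) :=
  le_csSup (finite_range w).bddAbove (mem_range_self i)

namespace IsMeanType

theorem iterate_mem (hT : IsMeanType I p T) {w : Fin p → ℝ} (hw : ∀ i, w i ∈ I) :
    ∀ n i, T^[n] w i ∈ I
  | 0 => hw
  | n + 1 => by
    rw [Function.iterate_succ_apply']
    exact hT.2 _ (hT.iterate_mem hw n)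

theorem apply_iterate_eq {F : (Fin p → ℝ) → ℝ} (hT : IsMeanType I p T)
    (hFinv : ∀ v : Fin p → ℝ, (∀ i, v i ∈ I) → F (T v) = F v) {w : Fin p → ℝ}
    (hw : ∀ i, w i ∈ I) : ∀ n, F (T^[n] w) = F w
  | 0 => rfl
  | n + 1 => by
    rw [Function.iterate_succ_apply', hFinv _ (hT.iterate_mem hw n), hT.apply_iterate_eq hFinv hw n]

end IsMeanType

variable [NeZero p]

theorem sInf_range_le_sSup_range (w : Fin p → ℝ) : sInf (range w) ≤ sSup (range w) :=
  csInf_le_csSup (range_nonempty w) (finite_range w).bddBelow (finite_range w).bddAbove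

theorem IsMean.mem {M : (Fin p → ℝ) → ℝ} (hM : IsMean I p M) (hI : I.OrdConnected)
    {w : Fin p → ℝ} (hw : ∀ i, w i ∈ I) : M w ∈ I := by
  obtain ⟨i, hi⟩ := (range_nonempty w).csInf_mem (finite_range w)
  obtain ⟨j, hj⟩ := (range_nonempty w).csSup_mem (finite_range w)
  exact hI.out (hi ▸ hw i) (hj ▸ hw j) (hM w hw)

theorem IsMeanType.sInf_range_le_sInf_range_apply (hT : IsMeanType I p T) {w : Fin p → ℝ}
    (hw : ∀ i, w i ∈ I) : sInf (range w) ≤ sInf (range (T w)) :=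
  le_csInf (range_nonempty _) (forall_mem_range.2 fun i => (hT.1 i w hw).1)

theorem IsMeanType.sSup_range_apply_le_sSup_range (hT : IsMeanType I p T) {w : Fin p → ℝ}
    (hw : ∀ i, w i ∈ I) : sSup (range (T w)) ≤ sSup (range w) :=
  csSup_le (range_nonempty _) (forall_mem_range.2 fun i => (hT.1 i w hw).2)

def orbitInf (T : (Fin p → ℝ) → Fin p → ℝ) (w : Fin p → ℝ) (n : ℕ) : ℝ :=
  sInf (range (T^[n] w))

def orbitSup (T : (Fin p → ℝ) → Fin p → ℝ) (w : Fin p → ℝ) (n : ℕ) : ℝ :=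
  sSup (range (T^[n] w))

def lowerOrbitLimit (T : (Fin p → ℝ) → Fin p → ℝ) (w : Fin p → ℝ) : ℝ :=
  ⨆ n, orbitInf T w n

def upperOrbitLimit (T : (Fin p → ℝ) → Fin p → ℝ) (w : Fin p → ℝ) : ℝ :=
  ⨅ n, orbitSup T w n

section Orbit

variable (hT : IsMeanType I p T) {w : Fin p → ℝ} (hw : ∀ i, w i ∈ I)
include hT hw

theorem orbitInf_monotone : Monotone (orbitInf T w) :=
  monotone_nat_of_le_succ fun n => by
    simpa only [orbitInf, Function.iterate_succ_apply'] using
      hT.sInf_range_le_sInf_range_apply (hT.iterate_mem hw n)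

theorem orbitSup_antitone : Antitone (orbitSup T w) :=
  antitone_nat_of_succ_le fun n => by
    simpa only [orbitSup, Function.iterate_succ_apply'] using
      hT.sSup_range_apply_le_sSup_range (hT.iterate_mem hw n)

theorem orbitInf_le_orbitSup (m n : ℕ) : orbitInf T w m ≤ orbitSup T w n :=
  calc orbitInf T w m ≤ orbitInf T w (max m n) := orbitInf_monotone hT hw (le_max_left m n)
    _ ≤ orbitSup T w (max m n) := sInf_range_le_sSup_range _
    _ ≤ orbitSup T w n := orbitSup_antitone hT hw (le_max_right m n)

theorem tendsto_orbitInf : Tendsto (orbitInf T w) atTop (𝓝 (lowerOrbitLimit T w)) :=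
  tendsto_atTop_ciSup (orbitInf_monotone hT hw)
    ⟨orbitSup T w 0, forall_mem_range.2 fun m => orbitInf_le_orbitSup hT hw m 0⟩

theorem tendsto_orbitSup : Tendsto (orbitSup T w) atTop (𝓝 (upperOrbitLimit T w)) :=
  tendsto_atTop_ciInf (orbitSup_antitone hT hw)
    ⟨orbitInf T w 0, forall_mem_range.2 fun n => orbitInf_le_orbitSup hT hw 0 n⟩

theorem lowerOrbitLimit_apply : lowerOrbitLimit T (T w) = lowerOrbitLimit T w := by
  have hshift : Tendsto (fun n => orbitInf T w (n + 1)) atTop (𝓝 (lowerOrbitLimit T w)) :=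
    (tendsto_add_atTop_iff_nat 1).2 (tendsto_orbitInf hT hw)
  simp only [orbitInf, Function.iterate_succ_apply] at hshift
  exact tendsto_nhds_unique (tendsto_orbitInf hT (hT.2 w hw)) hshift

theorem upperOrbitLimit_apply : upperOrbitLimit T (T w) = upperOrbitLimit T w := by
  have hshift : Tendsto (fun n => orbitSup T w (n + 1)) atTop (𝓝 (upperOrbitLimit T w)) :=
    (tendsto_add_atTop_iff_nat 1).2 (tendsto_orbitSup hT hw)
  simp only [orbitSup, Function.iterate_succ_apply] at hshift
  exact tendsto_nhds_unique (tendsto_orbitSup hT (hT.2 w hw)) hshift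

theorem tendsto_iterate_of_orbitLimit_eq {c : ℝ} (hlower : lowerOrbitLimit T w = c)
    (hupper : upperOrbitLimit T w = c) :
    Tendsto (fun n => T^[n] w) atTop (𝓝 fun _ => c) :=
  tendsto_pi_nhds.2 fun i =>
    tendsto_of_tendsto_of_tendsto_of_le_of_le (hlower ▸ tendsto_orbitInf hT hw)
      (hupper ▸ tendsto_orbitSup hT hw) (fun _ => sInf_range_le_apply _ i)
      (fun _ => apply_le_sSup_range _ i)

end Orbit

theorem isMean_lowerOrbitLimit (hT : IsMeanType I p T) : IsMean I p (lowerOrbitLimit T) :=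
  fun _ hw => ⟨(orbitInf_monotone hT hw).ge_of_tendsto (tendsto_orbitInf hT hw) 0,
    le_of_tendsto' (tendsto_orbitInf hT hw) fun n => orbitInf_le_orbitSup hT hw n 0⟩

theorem isMean_upperOrbitLimit (hT : IsMeanType I p T) : IsMean I p (upperOrbitLimit T) :=
  fun _ hw => ⟨ge_of_tendsto' (tendsto_orbitSup hT hw) fun n => orbitInf_le_orbitSup hT hw 0 n,
    (orbitSup_antitone hT hw).le_of_tendsto (tendsto_orbitSup hT hw) 0⟩

end

theorem reflexive_invariant_eq_unique_invariant_mean_general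
    {I : Set ℝ} (hI : I.OrdConnected)
    {p : ℕ} (hp : 2 ≤ p)
    (T : (Fin p → ℝ) → Fin p → ℝ) (hT : IsMeanType I p T)
    (K : (Fin p → ℝ) → ℝ) (hK : IsMean I p K)
    (hKuniq : ∀ K' : (Fin p → ℝ) → ℝ, IsMean I p K' →
      (∀ v : Fin p → ℝ, (∀ i, v i ∈ I) → K' (T v) = K' v) →
      ∀ v : Fin p → ℝ, (∀ i, v i ∈ I) → K' v = K v)
    (F : (Fin p → ℝ) → ℝ)
    (hrefl : ∀ t ∈ I, F (fun _ => t) = t)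
    (hF : ∀ t ∈ I, ContinuousWithinAt F {v : Fin p → ℝ | ∀ i, v i ∈ I}
      (fun _ => t))
    (hFinv : ∀ v : Fin p → ℝ, (∀ i, v i ∈ I) → F (T v) = F v) :
    ∀ v : Fin p → ℝ, (∀ i, v i ∈ I) → F v = K v := by
  intro v hv
  have : NeZero p := ⟨by omega⟩
  have hlower : lowerOrbitLimit T v = K v :=
    hKuniq _ (isMean_lowerOrbitLimit hT) (fun _ hw => lowerOrbitLimit_apply hT hw) v hv
  have hupper : upperOrbitLimit T v = K v :=
    hKuniq _ (isMean_upperOrbitLimit hT) (fun _ hw => upperOrbitLimit_apply hT hw) v hv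
  have hKv : K v ∈ I := hK.mem hI hv
  have horbit : Tendsto (fun n => T^[n] v) atTop
      (𝓝[{w : Fin p → ℝ | ∀ i, w i ∈ I}] fun _ => K v) :=
    tendsto_nhdsWithin_iff.2 ⟨tendsto_iterate_of_orbitLimit_eq hT hv hlower hupper,
      Eventually.of_forall fun n => hT.iterate_mem hv n⟩
  have hlim : Tendsto (fun n => F (T^[n] v)) atTop (𝓝 (K v)) :=
    hrefl (K v) hKv ▸ (hF (K v) hKv).tendsto.comp horbit
  simp only [hT.apply_iterate_eq hFinv hv] at hlim
  exact tendsto_nhds_unique tendsto_const_nhds hlim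

/-- If `K` is the unique `𝐌`-invariant mean and `F : I^p → ℝ`
is reflexive, continuous at every diagonal point and `𝐌`-invariant, then `F = K`. -/
theorem reflexive_invariant_eq_unique_invariant_mean
    {I : Set ℝ} (hne : I.Nonempty) (hI : I.OrdConnected)
    {p : ℕ} (hp : 2 ≤ p)
    (T : (Fin p → ℝ) → Fin p → ℝ) (hT : IsMeanType I p T)
    (K : (Fin p → ℝ) → ℝ) (hK : IsMean I p K)
    (hKinv : ∀ v : Fin p → ℝ, (∀ i, v i ∈ I) → K (T v) = K v)
    (hKuniq : ∀ K' : (Fin p → ℝ) → ℝ, IsMean I p K' →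
      (∀ v : Fin p → ℝ, (∀ i, v i ∈ I) → K' (T v) = K' v) →
      ∀ v : Fin p → ℝ, (∀ i, v i ∈ I) → K' v = K v)
    (F : (Fin p → ℝ) → ℝ)
    (hrefl : ∀ t ∈ I, F (fun _ => t) = t)
    (hF : ∀ t ∈ I, ContinuousWithinAt F {v : Fin p → ℝ | ∀ i, v i ∈ I}
      (fun _ => t))
    (hFinv : ∀ v : Fin p → ℝ, (∀ i, v i ∈ I) → F (T v) = F v) :
    ∀ v : Fin p → ℝ, (∀ i, v i ∈ I) → F v = K v :=
  reflexive_invariant_eq_unique_invariant_mean_general hI hp T hT K hK hKuniq F hrefl hF hFinv
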